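/- Theorem (bidiagonal case, part i). If ℓ = 1, then the weighted lattice-path matrix M is totally positive. -/

import Mathlib

open Finset

/-- A multivariate polynomial with real coefficients is *nonnegative* if all of
its coefficients are nonnegative. -/
def PolyNonneg {σ : Type*} (p : MvPolynomial σ ℝ) : Prop :=
  ∀ m, 0 ≤ p.coeff m

/-- An `ℕ × ℕ` matrix with entries in `MvPolynomial σ ℝ` is *totally positive*
if every minor (taken along strictly increasing row and column indices) is a
nonnegative polynomial. -/
def TP {σ : Type*} (A : ℕ → ℕ → MvPolynomial σ ℝ) : Prop :=
  ∀ r : ℕ, 1 ≤ r → ∀ ρ κ : Fin r → ℕ, StrictMono ρ → StrictMono κ →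
    PolyNonneg (Matrix.of fun i j : Fin r => A (ρ i) (κ j)).det

/-- The weighted lattice-path matrix `M`:
`M n 0 = ∏_{i=1}^n b i`, `M n k = 0` for `k ≥ 1` and `n < t`, and
`M n k = Σ_{i=0}^{ℓ} (a n i) * M (n-t-i) (k-1) + (b n) * M (n-1) k`
for `n ≥ t`, `k ≥ 1`, where summands with a negative first index vanish. -/
def latticeM {R : Type*} [CommRing R] (t ℓ : ℕ) (a : ℕ → ℕ → R) (b : ℕ → R) :
    ℕ → ℕ → R
  | n, 0 => ∏ i ∈ Finset.Icc 1 n, b i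
  | 0, k + 1 => if t = 0 then a 0 0 * latticeM t ℓ a b 0 k else 0
  | n + 1, k + 1 =>
      if n + 1 < t then 0
      else (∑ i ∈ Finset.range (ℓ + 1),
              if t + i ≤ n + 1 then a (n + 1) i * latticeM t ℓ a b (n + 1 - t - i) k
              else 0)
        + b (n + 1) * latticeM t ℓ a b n (k + 1)
  termination_by n k => (k, n)

/-- The Toeplitz matrix of a sequence: `𝒯(c) i j = c (i - j)` for `i ≥ j`
and `0` otherwise. -/
def toeplitz {R : Type*} [CommRing R] (c : ℕ → R) : ℕ → ℕ → R :=
  fun i j => if j ≤ i then c (i - j) else 0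

/-!
Write `v(s, y)` for row `y` of `M` shifted `s` columns to the right. For `ℓ = 1` the recurrence
of `M` writes `v(s, y)`, `y ≥ 1`, as a combination with weight coefficients of `v(s, y - 1)`,
`v(s + 1, y - t)` and `v(s + 1, y - t - 1)`, and `v(s, 0)` as one of `v(s + 1, 0)` and a unit
vector. A minor of `M` has rows `v(0, ρ i)`; more generally, every minor with rows `v(s i, y i)`
lies in the subsemiring generated by the weights as soon as `i ↦ (s i, y i + t * s i)` is
monotone. Each move above raises `s` by at most one and lowers `y + t * s` by at most one, so
expanding the determinant multilinearly along the first row of maximal `y` gives determinants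
of the same kind (or with two equal rows) and lowers the potential `∑ (y i + (K + 1 - s i))`,
where `K` bounds the columns and rows with `s > K` vanish. When all `y i = 0`, the unit vector
leaves a smaller minor by Laplace expansion.
-/

open Function

theorem Finite.exists_first_max {ι α : Type*} [LinearOrder ι] [WellFoundedLT ι] [Finite ι]
    [Nonempty ι] [LinearOrder α] (f : ι → α) :
    ∃ J, (∀ i, f i ≤ f J) ∧ ∀ i < J, f i < f J := by
  obtain ⟨m, hm⟩ := Finite.exists_max f
  obtain ⟨J, hJ, hmin⟩ := wellFounded_lt.has_min {i | ∀ k, f k ≤ f i} ⟨m, hm⟩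
  exact ⟨J, hJ, fun i hi => (hJ i).lt_of_ne fun h => hmin i (fun k => h ▸ hJ k) hi⟩

theorem Monotone.update {ι α : Type*} [PartialOrder ι] [DecidableEq ι] [Preorder α] {f : ι → α}
    (hf : Monotone f) {J : ι} {x : α} (hlt : ∀ i < J, f i ≤ x) (hgt : ∀ j, J < j → x ≤ f j) :
    Monotone (update f J x) := by
  intro i j hij
  rcases eq_or_ne i J with rfl | hi
  · rcases hij.eq_or_lt with rfl | hlt
    · rfl
    · simpa [hlt.ne'] using hgt j hlt
  · rcases eq_or_ne j J with rfl | hj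
    · simpa [hi] using hlt i (hij.lt_of_ne hi)
    · simpa [hi, hj] using hf hij

theorem Finset.sum_comp_update_lt {ι α M : Type*} [Fintype ι] [DecidableEq ι] [AddCommMonoid M]
    [PartialOrder M] [IsOrderedCancelAddMonoid M] (g : α → M) (p : ι → α) (J : ι) {q : α}
    (h : g q < g (p J)) : ∑ i, g (update p J q i) < ∑ i, g (p i) := by
  refine Finset.sum_lt_sum (fun i _ => ?_) ⟨J, mem_univ J, by simpa using h⟩
  rcases eq_or_ne i J with rfl | hi
  · simpa using h.le
  · simp [hi]

theorem Matrix.det_eq_det_submatrix_succ_of_row_zero_eq_single {R : Type*} [CommRing R] {m : ℕ}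
    (A : Matrix (Fin (m + 1)) (Fin (m + 1)) R) (h : A 0 = Pi.single 0 1) :
    A.det = (A.submatrix Fin.succ Fin.succ).det := by
  rw [det_succ_row_zero, Fin.sum_univ_succ, h]
  simp

def nonnegPolys (σ : Type*) : Subsemiring (MvPolynomial σ ℝ) where
  carrier := {p | PolyNonneg p}
  zero_mem' _ := by simp
  one_mem' m := by
    classical
    rw [MvPolynomial.coeff_one]
    split_ifs <;> norm_num
  add_mem' hp hq m := by simpa using add_nonneg (hp m) (hq m)
  mul_mem' {p q} hp hq m := by
    classical
    rw [MvPolynomial.coeff_mul]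
    exact Finset.sum_nonneg fun x _ => mul_nonneg (hp x.1) (hq x.2)

@[simp]
theorem mem_nonnegPolys {σ : Type*} {p : MvPolynomial σ ℝ} : p ∈ nonnegPolys σ ↔ PolyNonneg p :=
  Iff.rfl

section

variable {R : Type*} [CommRing R] (t : ℕ) {ℓ : ℕ} (a : ℕ → ℕ → R) (b : ℕ → R)

theorem latticeM_zero_right (n : ℕ) : latticeM t ℓ a b n 0 = ∏ i ∈ Icc 1 n, b i := by
  rw [latticeM]

theorem latticeM_zero_succ (k : ℕ) :
    latticeM t ℓ a b 0 (k + 1) = if t = 0 then a 0 0 * latticeM t ℓ a b 0 k else 0 := by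
  rw [latticeM]

theorem latticeM_succ_of_lt {n : ℕ} (hn : n < t) (k : ℕ) : latticeM t ℓ a b n (k + 1) = 0 := by
  cases n with
  | zero => simp [latticeM_zero_succ, hn.ne']
  | succ n => rw [latticeM, if_pos hn]

theorem latticeM_succ_succ {n : ℕ} (hn : t ≤ n + 1) (k : ℕ) :
    latticeM t 1 a b (n + 1) (k + 1) =
      a (n + 1) 0 * latticeM t 1 a b (n + 1 - t) k
        + (if t ≤ n then a (n + 1) 1 * latticeM t 1 a b (n - t) k else 0)
        + b (n + 1) * latticeM t 1 a b n (k + 1) := by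
  rw [latticeM, if_neg hn.not_gt, sum_range_succ, sum_range_one, if_pos (by omega)]
  simp only [Nat.sub_zero, Nat.add_le_add_iff_right, show n + 1 - t - 1 = n - t by omega]

end

namespace LatticeM

open Matrix

variable {R : Type*} [CommRing R] (t : ℕ) (a : ℕ → ℕ → R) (b : ℕ → R)

def shiftedRow (q : ℕ × ℕ) (k : ℕ) : R :=
  if k < q.1 then 0 else latticeM t 1 a b q.2 (k - q.1)

theorem shiftedRow_zero (s : ℕ) :
    shiftedRow t a b (s, 0) =
      (if t = 0 then a 0 0 else 0) • shiftedRow t a b (s + 1, 0) + Pi.single s 1 := by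
  funext k
  simp only [Pi.add_apply, Pi.smul_apply, smul_eq_mul, Pi.single_apply, shiftedRow]
  rcases lt_trichotomy k s with hk | rfl | hk
  · simp [hk, hk.ne, show k < s + 1 by omega]
  · simp [latticeM_zero_right]
  · obtain ⟨c, rfl⟩ : ∃ c, k = s + 1 + c := ⟨k - (s + 1), by omega⟩
    simp only [show s + 1 + c - s = c + 1 by omega, latticeM_zero_succ]
    split_ifs <;> first | omega | simp

theorem shiftedRow_succ (s n : ℕ) :
    shiftedRow t a b (s, n + 1) =
      b (n + 1) • shiftedRow t a b (s, n)
        + (if t ≤ n + 1 then a (n + 1) 0 else 0) • shiftedRow t a b (s + 1, n + 1 - t)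
        + (if t ≤ n then a (n + 1) 1 else 0) • shiftedRow t a b (s + 1, n - t) := by
  funext k
  simp only [Pi.add_apply, Pi.smul_apply, smul_eq_mul, shiftedRow]
  rcases lt_trichotomy k s with hk | rfl | hk
  · simp [hk, show k < s + 1 by omega]
  · simp [latticeM_zero_right, prod_Icc_succ_top, mul_comm]
  · obtain ⟨c, rfl⟩ : ∃ c, k = s + 1 + c := ⟨k - (s + 1), by omega⟩
    simp only [show s + 1 + c - s = c + 1 by omega, Nat.add_sub_cancel_left,
      show ¬ s + 1 + c < s by omega, show ¬ s + 1 + c < s + 1 by omega, if_false]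
    by_cases htn : t ≤ n + 1
    · rw [latticeM_succ_succ t a b htn]
      split_ifs <;> ring
    · simp [latticeM_succ_of_lt t a b (not_le.mp htn),
        latticeM_succ_of_lt t a b (n := n) (by omega), htn, show ¬ t ≤ n by omega]

def shiftedMinor {r : ℕ} (p : Fin r → ℕ × ℕ) (κ : Fin r → ℕ) : Matrix (Fin r) (Fin r) R :=
  Matrix.of fun i j => shiftedRow t a b (p i) (κ j)

theorem shiftedMinor_update {r : ℕ} (p : Fin r → ℕ × ℕ) (κ : Fin r → ℕ) (J : Fin r) (q : ℕ × ℕ) :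
    shiftedMinor t a b (update p J q) κ =
      (shiftedMinor t a b p κ).updateRow J (shiftedRow t a b q ∘ κ) := by
  ext i j
  rcases eq_or_ne i J with rfl | hi <;> simp [shiftedMinor, *]

theorem shiftedMinor_row {r : ℕ} (p : Fin r → ℕ × ℕ) (κ : Fin r → ℕ) (J : Fin r) :
    shiftedMinor t a b p κ J = shiftedRow t a b (p J) ∘ κ :=
  rfl

theorem det_shiftedMinor_of_snd_eq_succ {r : ℕ} (p : Fin r → ℕ × ℕ) (κ : Fin r → ℕ) {J : Fin r}
    {n : ℕ} (hJ : (p J).2 = n + 1) :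
    (shiftedMinor t a b p κ).det =
      b (n + 1) * (shiftedMinor t a b (update p J ((p J).1, n)) κ).det
        + (if t ≤ n + 1 then a (n + 1) 0 else 0)
          * (shiftedMinor t a b (update p J ((p J).1 + 1, n + 1 - t)) κ).det
        + (if t ≤ n then a (n + 1) 1 else 0)
          * (shiftedMinor t a b (update p J ((p J).1 + 1, n - t)) κ).det := by
  conv_lhs => rw [← (shiftedMinor t a b p κ).updateRow_eq_self J]
  rw [shiftedMinor_row,
    show p J = ((p J).1, n + 1) from Prod.ext rfl hJ, shiftedRow_succ]
  simp only [Pi.add_comp, Pi.smul_comp, det_updateRow_add, det_updateRow_smul,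
    shiftedMinor_update]

theorem det_shiftedMinor_of_snd_eq_zero {r : ℕ} (p : Fin r → ℕ × ℕ) (κ : Fin r → ℕ) {J : Fin r}
    (hJ : (p J).2 = 0) :
    (shiftedMinor t a b p κ).det =
      (if t = 0 then a 0 0 else 0) * (shiftedMinor t a b (update p J ((p J).1 + 1, 0)) κ).det
        + ((shiftedMinor t a b p κ).updateRow J (Pi.single (p J).1 1 ∘ κ)).det := by
  conv_lhs => rw [← (shiftedMinor t a b p κ).updateRow_eq_self J]
  rw [shiftedMinor_row,
    show p J = ((p J).1, 0) from Prod.ext rfl hJ, shiftedRow_zero]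
  simp only [Pi.add_comp, Pi.smul_comp, det_updateRow_add, det_updateRow_smul,
    shiftedMinor_update]

theorem det_updateRow_single_shiftedMinor {m : ℕ} (p : Fin (m + 1) → ℕ × ℕ)
    {κ : Fin (m + 1) → ℕ} (hκ : StrictMono κ) (hp : ∀ i, (p 0).1 ≤ (p i).1) :
    ((shiftedMinor t a b p κ).updateRow 0 (Pi.single (p 0).1 1 ∘ κ)).det =
      if κ 0 = (p 0).1 then (shiftedMinor t a b (p ∘ Fin.succ) (κ ∘ Fin.succ)).det else 0 := by
  rcases lt_trichotomy (κ 0) (p 0).1 with h | h | h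
  · rw [if_neg h.ne, det_eq_zero_of_column_eq_zero 0]
    intro i
    cases i using Fin.cases with
    | zero => simp [h.ne]
    | succ i => simp [shiftedMinor, shiftedRow, h.trans_le (hp i.succ), Fin.succ_ne_zero]
  · rw [if_pos h, det_eq_det_submatrix_succ_of_row_zero_eq_single]
    · rfl
    · funext j
      simp [Pi.single_apply, ← h, hκ.injective.eq_iff]
  · rw [if_neg h.ne', det_eq_zero_of_row_eq_zero 0]
    intro j
    simp [(h.trans_le (hκ.monotone (Fin.zero_le j))).ne']

def shear (q : ℕ × ℕ) : ℕ × ℕ := (q.1, q.2 + t * q.1)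

theorem shear_le_shear {q q' : ℕ × ℕ} :
    shear t q ≤ shear t q' ↔ q.1 ≤ q'.1 ∧ q.2 + t * q.1 ≤ q'.2 + t * q'.1 :=
  Prod.mk_le_mk

theorem monotone_shear_comp_update {ι : Type*} [LinearOrder ι] {p : ι → ℕ × ℕ}
    (hp : Monotone (shear t ∘ p)) (hinj : Injective p) {J : ι} (hmax : ∀ i, (p i).2 ≤ (p J).2)
    (hfirst : ∀ i < J, (p i).2 < (p J).2) {q : ℕ × ℕ} (hq : (p J).1 ≤ q.1 ∧ q.1 ≤ (p J).1 + 1)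
    (hlevel : q.2 + t * q.1 ≤ (p J).2 + t * (p J).1 ∧ (p J).2 + t * (p J).1 ≤ q.2 + t * q.1 + 1) :
    Monotone (shear t ∘ update p J q) := by
  rw [comp_update]
  refine hp.update (fun i hi => ?_) (fun j hj => ?_)
  · obtain ⟨hs, -⟩ := (shear_le_shear t).1 (hp hi.le)
    have := hfirst i hi
    have := Nat.mul_le_mul_left t hs
    exact (shear_le_shear t).2 ⟨by omega, by omega⟩
  · obtain ⟨hs, hl⟩ := (shear_le_shear t).1 (hp hj.le)
    have hlt : (p J).1 < (p j).1 := by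
      refine hs.lt_of_ne fun heq => hj.ne (hinj (Prod.ext heq ?_))
      rw [heq] at hl
      exact le_antisymm (by omega) (hmax j)
    exact (shear_le_shear t).2 ⟨by omega, by omega⟩

def potential (K : ℕ) (q : ℕ × ℕ) : ℕ := q.2 + (K + 1 - q.1)

variable {t a b} {S : Subsemiring R}

theorem det_shiftedMinor_mem_of_snd_eq_succ (ha : ∀ n i, i ≤ 1 → a n i ∈ S)
    (hb : ∀ n, b n ∈ S) {K r : ℕ} {p : Fin r → ℕ × ℕ} {κ : Fin r → ℕ}
    (hp : Monotone (shear t ∘ p)) (hinj : Injective p) (hK : ∀ i, (p i).1 ≤ K) {J : Fin r}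
    (hmax : ∀ i, (p i).2 ≤ (p J).2) (hfirst : ∀ i < J, (p i).2 < (p J).2) {n : ℕ}
    (hn : (p J).2 = n + 1)
    (ih : ∀ p' : Fin r → ℕ × ℕ, Monotone (shear t ∘ p') →
      ∑ i, potential K (p' i) < ∑ i, potential K (p i) → (shiftedMinor t a b p' κ).det ∈ S) :
    (shiftedMinor t a b p κ).det ∈ S := by
  have hJK := hK J
  have step : ∀ q : ℕ × ℕ, potential K q < potential K (p J) →
      (p J).1 ≤ q.1 ∧ q.1 ≤ (p J).1 + 1 →
      q.2 + t * q.1 ≤ (p J).2 + t * (p J).1 ∧ (p J).2 + t * (p J).1 ≤ q.2 + t * q.1 + 1 →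
      (shiftedMinor t a b (update p J q) κ).det ∈ S := fun q hpot hq hlevel =>
    ih _ (monotone_shear_comp_update t hp hinj hmax hfirst hq hlevel)
      (sum_comp_update_lt _ _ _ hpot)
  rw [det_shiftedMinor_of_snd_eq_succ t a b p κ hn]
  refine add_mem (add_mem ?_ ?_) ?_
  · refine mul_mem (hb _) (step _ ?_ ?_ ?_) <;> simp only [potential] <;> omega
  · split_ifs with h
    · refine mul_mem (ha _ _ zero_le_one) (step _ ?_ ?_ ?_) <;>
        simp only [potential, mul_add, mul_one] <;> omega
    · rw [zero_mul]
      exact zero_mem S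
  · split_ifs with h
    · refine mul_mem (ha _ _ le_rfl) (step _ ?_ ?_ ?_) <;>
        simp only [potential, mul_add, mul_one] <;> omega
    · rw [zero_mul]
      exact zero_mem S

theorem det_shiftedMinor_mem_of_snd_eq_zero (ha : ∀ n i, i ≤ 1 → a n i ∈ S) {K m : ℕ}
    {p : Fin (m + 1) → ℕ × ℕ} {κ : Fin (m + 1) → ℕ} (hκ : StrictMono κ) (hκK : ∀ j, κ j ≤ K)
    (hp : Monotone (shear t ∘ p)) (hinj : Injective p) (hK : ∀ i, (p i).1 ≤ K)
    (hzero : ∀ i, (p i).2 = 0)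
    (ih : ∀ {r'} (p' : Fin r' → ℕ × ℕ) (κ' : Fin r' → ℕ), StrictMono κ' → (∀ j, κ' j ≤ K) →
      Monotone (shear t ∘ p') → ∑ i, potential K (p' i) < ∑ i, potential K (p i) →
      (shiftedMinor t a b p' κ').det ∈ S) :
    (shiftedMinor t a b p κ).det ∈ S := by
  have hs : ∀ i, (p 0).1 ≤ (p i).1 := fun i => ((shear_le_shear t).1 (hp (Fin.zero_le i))).1
  have hK0 := hK 0
  rw [det_shiftedMinor_of_snd_eq_zero t a b p κ (hzero 0),
    det_updateRow_single_shiftedMinor t a b p hκ hs]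
  refine add_mem ?_ ?_
  · split_ifs with ht
    · subst ht
      refine mul_mem (ha 0 0 zero_le_one) (ih _ κ hκ hκK ?_ (sum_comp_update_lt _ _ _ ?_))
      · exact monotone_shear_comp_update 0 hp hinj (by simp [hzero])
          (fun i hi => absurd hi (Fin.not_lt_zero i)) (by omega) (by simp [hzero])
      · simp only [potential, hzero]
        omega
    · simp
  · split_ifs
    · refine ih _ _ (hκ.comp Fin.strictMono_succ) (fun j => hκK _)
        (hp.comp Fin.strictMono_succ.monotone) ?_
      rw [Fin.sum_univ_succ (fun i => potential K (p i))]
      simp only [potential, Function.comp_apply]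
      omega
    · exact zero_mem S

theorem det_shiftedMinor_mem (ha : ∀ n i, i ≤ 1 → a n i ∈ S) (hb : ∀ n, b n ∈ S) {K r : ℕ}
    {p : Fin r → ℕ × ℕ} {κ : Fin r → ℕ} (hκ : StrictMono κ) (hκK : ∀ j, κ j ≤ K)
    (hp : Monotone (shear t ∘ p)) : (shiftedMinor t a b p κ).det ∈ S := by
  obtain ⟨N, hN⟩ : ∃ N, ∑ i, potential K (p i) = N := ⟨_, rfl⟩
  induction N using Nat.strong_induction_on generalizing r p κ with
  | _ N ih =>
  subst hN
  replace ih := fun {r'} (p' : Fin r' → ℕ × ℕ) (κ' : Fin r' → ℕ) h₁ h₂ h₃ hlt =>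
    ih _ hlt (p := p') (κ := κ') h₁ h₂ h₃ rfl
  by_cases hinj : Injective p
  swap
  · obtain ⟨i, j, hij, hne⟩ : ∃ i j, p i = p j ∧ i ≠ j := by simpa [Injective] using hinj
    rw [det_zero_of_row_eq hne (by simp [shiftedMinor_row, hij])]
    exact zero_mem S
  by_cases hK : ∃ i, K < (p i).1
  · obtain ⟨i, hi⟩ := hK
    rw [det_eq_zero_of_row_eq_zero i fun j => if_pos ((hκK j).trans_lt hi)]
    exact zero_mem S
  push Not at hK
  rcases r with _ | m
  · rw [det_isEmpty]
    exact one_mem S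
  by_cases hzero : ∀ i, (p i).2 = 0
  · exact det_shiftedMinor_mem_of_snd_eq_zero ha hκ hκK hp hinj hK hzero ih
  push Not at hzero
  obtain ⟨i, hi⟩ := hzero
  obtain ⟨J, hmax, hfirst⟩ := Finite.exists_first_max fun i => (p i).2
  obtain ⟨n, hn⟩ := Nat.exists_eq_succ_of_ne_zero (hi.bot_lt.trans_le (hmax i)).ne'
  exact det_shiftedMinor_mem_of_snd_eq_succ ha hb hp hinj hK hmax hfirst hn
    fun p' hp' hlt => ih p' κ hκ hκK hp' hlt

end LatticeM

/-- **Theorem (bidiagonal case, part i).**  If `ℓ = 1`, then the weighted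
lattice-path matrix `M` is totally positive. -/
theorem latticeM_totallyPositive_of_ell_eq_one
    {σ : Type*} (t : ℕ) (a : ℕ → ℕ → MvPolynomial σ ℝ) (b : ℕ → MvPolynomial σ ℝ)
    (ha : ∀ n i, i ≤ 1 → PolyNonneg (a n i)) (hb : ∀ n, PolyNonneg (b n)) :
    TP (latticeM t 1 a b) := by
  intro r _ ρ κ hρ hκ
  have hsources : Monotone (LatticeM.shear t ∘ fun i => (0, ρ i)) := fun i j hij => by
    simpa [LatticeM.shear] using hρ.monotone hij
  have h : _ ∈ nonnegPolys σ := LatticeM.det_shiftedMinor_mem (a := a) (b := b)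
    ha hb hκ (fun j => le_sup (mem_univ j)) hsources
  simpa [LatticeM.shiftedMinor, LatticeM.shiftedRow] using h
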